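/- Let A be a symmetric positive definite real 3×3 matrix, u ∈ ℝ³ a unit vector, and Θ a nonempty finite set of reals with 0 < |θ'| ≤ π for every θ' ∈ Θ; set θ_m := min_{θ'∈Θ} |θ'|. Suppose Δ* > 0 is such that Δ(v,u) ≥ Δ* for every unit eigenvector v of A. Let 0 < γ < 4Δ*/π² and 0 < δ < (4Δ*/π² − γ)·θ_m²/2. Then for every unit eigenvector v of A: U(Ra(π,v),0) − min_{θ'∈Θ} U(Ra(π,v),θ') > δ. -/

import Mathlib

open Matrix

noncomputable section

abbrev M3 : Type := Matrix (Fin 3) (Fin 3) ℝ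
abbrev V3 : Type := Fin 3 → ℝ

/-- skew-symmetric matrix associated to `x`: `skew x *ᵥ y = x ×₃ y`. -/
def skew (x : V3) : M3 :=
  !![0, -x 2, x 1; x 2, 0, -x 0; -x 1, x 0, 0]

/-- the special orthogonal group SO(3) as a subset of 3×3 matrices -/
def SO3 : Set M3 := {R | Rᵀ * R = 1 ∧ R.det = 1}

/-- Rodrigues formula -/
def Ra (θ : ℝ) (u : V3) : M3 :=
  1 + Real.sin θ • skew u + (1 - Real.cos θ) • (skew u * skew u)

/-- `psi M = vec (P_a M)`, the vector part of the antisymmetric projection -/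
def psi (M : M3) : V3 :=
  ![(M 2 1 - M 1 2) / 2, (M 0 2 - M 2 0) / 2, (M 1 0 - M 0 1) / 2]

/-- the angular-warping transformation `T(R,θ) = R · Ra(θ,u)` -/
def Tmap (u : V3) (R : M3) (θ : ℝ) : M3 := R * Ra θ u

/-- the potential function `U(R,θ)` on SO(3) × ℝ -/
def Ufun (A : M3) (u : V3) (γ : ℝ) (R : M3) (θ : ℝ) : ℝ :=
  (A * (1 - Tmap u R θ)).trace + γ / 2 * θ ^ 2

/-- Euclidean norm on ℝ³ -/
def enorm3 (x : V3) : ℝ := Real.sqrt (x ⬝ᵥ x)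

/-- Frobenius norm of a 3×3 matrix -/
def fnorm (M : M3) : ℝ := Real.sqrt ((Mᵀ * M).trace)

/-- `E(M) := (tr(M) I − Mᵀ)/2` -/
def Emap (M : M3) : M3 := (2⁻¹ : ℝ) • (M.trace • (1 : M3) - Mᵀ)

/-- `D_R(R,θ)` from Lemma 2 -/
def DR (A : M3) (u : V3) (R : M3) (θ : ℝ) : M3 :=
  Ra θ u * Emap (A * Tmap u R θ) * (Ra θ u)ᵀ

/-- `D_θ(R,θ)` from Lemma 2 -/
def Dθ (A : M3) (u : V3) (R : M3) (θ : ℝ) : V3 :=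
  (Ra θ u * Emap (A * Tmap u R θ)) *ᵥ u - skew (Ra θ u *ᵥ psi (A * Tmap u R θ)) *ᵥ u

/-- Δ(v,u) from the construction of the synergistic gap -/
def Delta (A : M3) (v u : V3) : ℝ :=
  u ⬝ᵥ ((A.trace • (1 : M3) - A - (2 * (v ⬝ᵥ A *ᵥ v)) • ((1 : M3) - vecMulVec v v)) *ᵥ u)

/-- `v` is a unit eigenvector of `A` -/
def IsUnitEigen (A : M3) (v : V3) : Prop :=
  v ⬝ᵥ v = 1 ∧ ∃ lam : ℝ, A *ᵥ v = lam • v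

/-- Ā := (tr(A) I − A)/2 -/
def Abar (A : M3) : M3 := (2⁻¹ : ℝ) • (A.trace • (1 : M3) - A)

/-- `lam` is an eigenvalue of `M` -/
def IsEigen (M : M3) (lam : ℝ) : Prop := ∃ w : V3, w ≠ 0 ∧ M *ᵥ w = lam • w

/-!
For a unit eigenvector `v` of `A` with eigenvalue `λ`, `Ra(π,v) = 2vvᵀ − I`, so
`A · Ra(π,v) = 2λvvᵀ − A` is symmetric. Expanding `U` by Rodrigues' formula, the `sin θ` term is
the trace of this symmetric matrix against the skew matrix `u^×` and vanishes, while
`(u^×)² = uuᵀ − |u|² I` turns the `1 − cos θ` term into `Δ(v,u)`: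
`U(Ra(π,v),0) − U(Ra(π,v),θ) = (1 − cos θ) Δ(v,u) − γθ²/2`.
With `cos θ ≤ 1 − 2θ²/π²` on `[−π, π]` this is at least
`(4Δ*/π² − γ) θ²/2 ≥ (4Δ*/π² − γ) θ_m²/2 > δ` at the minimising `θ' ∈ Θ`.
-/

theorem Matrix.trace_mul_eq_zero_of_isSymm_of_transpose_eq_neg {n R : Type*} [Fintype n]
    [CommRing R] [NoZeroDivisors R] [CharZero R] {S K : Matrix n n R} (hS : S.IsSymm)
    (hK : Kᵀ = -K) : (S * K).trace = 0 := by
  rw [← CharZero.eq_neg_self_iff]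
  calc (S * K).trace = (S * K)ᵀ.trace := (trace_transpose _).symm
    _ = -(S * K).trace := by rw [transpose_mul, hK, hS.eq, neg_mul, trace_neg, trace_mul_comm]

theorem skew_transpose (u : V3) : (skew u)ᵀ = -skew u := by
  ext i j; fin_cases i <;> fin_cases j <;> simp [skew]

theorem skew_mul_skew (u : V3) : skew u * skew u = vecMulVec u u - (u ⬝ᵥ u) • 1 := by
  ext i j
  fin_cases i <;> fin_cases j <;>
    simp [skew, mul_apply, vecMulVec_apply, dotProduct, Fin.sum_univ_three] <;> ring

theorem trace_mul_skew_mul_skew (S : M3) (u : V3) :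
    (S * (skew u * skew u)).trace = u ⬝ᵥ ((S - S.trace • 1) *ᵥ u) := by
  rw [skew_mul_skew, mul_sub, Matrix.mul_smul, mul_one, trace_sub, trace_smul, mul_vecMulVec,
    trace_vecMulVec, sub_mulVec, smul_mulVec, one_mulVec, dotProduct_sub, dotProduct_smul,
    dotProduct_comm, dotProduct_comm u u, smul_eq_mul, smul_eq_mul, mul_comm]

theorem Ra_zero (u : V3) : Ra 0 u = 1 := by simp [Ra]

theorem Ra_pi {v : V3} (hv : v ⬝ᵥ v = 1) : Ra Real.pi v = (2 : ℝ) • vecMulVec v v - 1 := by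
  rw [Ra, Real.sin_pi, Real.cos_pi, skew_mul_skew, hv]
  module

theorem Ufun_zero_sub (A : M3) (u : V3) (γ : ℝ) (R : M3) (θ : ℝ) :
    Ufun A u γ R 0 - Ufun A u γ R θ =
      Real.sin θ * (A * R * skew u).trace
        + (1 - Real.cos θ) * (A * R * (skew u * skew u)).trace - γ / 2 * θ ^ 2 := by
  simp only [Ufun, Tmap, Ra_zero, Matrix.mul_one]
  simp only [Ra, Matrix.mul_add, Matrix.mul_sub, Matrix.mul_smul, Matrix.mul_one,
    ← Matrix.mul_assoc, trace_add, trace_sub, trace_smul, smul_eq_mul]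
  ring

theorem mul_Ra_pi_of_eigen {A : M3} {v : V3} {lam : ℝ} (hv : v ⬝ᵥ v = 1)
    (hev : A *ᵥ v = lam • v) : A * Ra Real.pi v = (2 * lam) • vecMulVec v v - A := by
  rw [Ra_pi hv, Matrix.mul_sub, Matrix.mul_smul, Matrix.mul_one, mul_vecMulVec, hev,
    smul_vecMulVec, smul_smul]

theorem Ufun_Ra_pi_zero_sub {A : M3} (hA : A.IsSymm) {v : V3} {lam : ℝ} (hv : v ⬝ᵥ v = 1)
    (hev : A *ᵥ v = lam • v) (u : V3) (γ θ : ℝ) :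
    Ufun A u γ (Ra Real.pi v) 0 - Ufun A u γ (Ra Real.pi v) θ
      = (1 - Real.cos θ) * Delta A v u - γ / 2 * θ ^ 2 := by
  have hS : ((2 * lam) • vecMulVec v v - A).IsSymm :=
    (IsSymm.smul (transpose_vecMulVec v v) _).sub hA
  have hvAv : v ⬝ᵥ A *ᵥ v = lam := by rw [hev, dotProduct_smul, hv, smul_eq_mul, mul_one]
  rw [Ufun_zero_sub, mul_Ra_pi_of_eigen hv hev,
    trace_mul_eq_zero_of_isSymm_of_transpose_eq_neg hS (skew_transpose u),
    trace_mul_skew_mul_skew, Delta, hvAv, trace_sub, trace_smul, trace_vecMulVec, hv, smul_eq_mul,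
    mul_one, mul_zero, zero_add]
  congr 4
  module

theorem le_one_sub_cos_mul_sub_of_abs_le_pi {θ Δ Δstar γ : ℝ} (hθ : |θ| ≤ Real.pi)
    (hΔstar : 0 ≤ Δstar) (hΔ : Δstar ≤ Δ) :
    (4 * Δstar / Real.pi ^ 2 - γ) * θ ^ 2 / 2 ≤ (1 - Real.cos θ) * Δ - γ / 2 * θ ^ 2 := by
  have hcos : 2 / Real.pi ^ 2 * θ ^ 2 ≤ 1 - Real.cos θ := by
    linarith [Real.cos_le_one_sub_mul_cos_sq hθ]
  calc (4 * Δstar / Real.pi ^ 2 - γ) * θ ^ 2 / 2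
      = 2 / Real.pi ^ 2 * θ ^ 2 * Δstar - γ / 2 * θ ^ 2 := by ring
    _ ≤ (1 - Real.cos θ) * Δ - γ / 2 * θ ^ 2 := by gcongr; linarith [Real.cos_le_one θ]

theorem synergistic_gap_general
    (A : M3) (hA : A.PosDef) (u : V3)
    (Θ : Finset ℝ) (hΘne : Θ.Nonempty) (hΘ : ∀ θ' ∈ Θ, 0 < |θ'| ∧ |θ'| ≤ Real.pi)
    (θm : ℝ) (hθm : θm = Θ.inf' hΘne (fun θ' => |θ'|))
    (Δstar : ℝ) (hΔpos : 0 < Δstar)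
    (hΔ : ∀ v : V3, IsUnitEigen A v → Δstar ≤ Delta A v u)
    (γ δ : ℝ) (hγ' : γ < 4 * Δstar / Real.pi ^ 2)
    (hδ' : δ < (4 * Δstar / Real.pi ^ 2 - γ) * θm ^ 2 / 2) :
    ∀ v : V3, IsUnitEigen A v →
      Ufun A u γ (Ra Real.pi v) 0 -
        Θ.inf' hΘne (fun θ' => Ufun A u γ (Ra Real.pi v) θ') > δ := by
  rintro v ⟨hv, lam, hev⟩
  obtain ⟨θ₀, hθ₀, hmin⟩ := Finset.exists_mem_eq_inf' hΘne (Ufun A u γ (Ra Real.pi v))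
  have hθm_sq : θm ^ 2 ≤ θ₀ ^ 2 := by
    rw [← sq_abs θ₀]
    gcongr
    · exact hθm ▸ Finset.le_inf' hΘne _ fun θ' _ => abs_nonneg θ'
    · exact hθm ▸ Finset.inf'_le _ hθ₀
  rw [gt_iff_lt, hmin, Ufun_Ra_pi_zero_sub (isHermitian_iff_isSymm.mp hA.isHermitian) hv hev]
  calc δ < (4 * Δstar / Real.pi ^ 2 - γ) * θm ^ 2 / 2 := hδ'
    _ ≤ (4 * Δstar / Real.pi ^ 2 - γ) * θ₀ ^ 2 / 2 := by gcongr
    _ ≤ _ := le_one_sub_cos_mul_sub_of_abs_le_pi (hΘ θ₀ hθ₀).2 hΔpos.le (hΔ v ⟨hv, lam, hev⟩)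

theorem synergistic_gap
    (A : M3) (hA : A.PosDef) (u : V3) (hu : u ⬝ᵥ u = 1)
    (Θ : Finset ℝ) (hΘne : Θ.Nonempty) (hΘ : ∀ θ' ∈ Θ, 0 < |θ'| ∧ |θ'| ≤ Real.pi)
    (θm : ℝ) (hθm : θm = Θ.inf' hΘne (fun θ' => |θ'|))
    (Δstar : ℝ) (hΔpos : 0 < Δstar)
    (hΔ : ∀ v : V3, IsUnitEigen A v → Δstar ≤ Delta A v u)
    (γ δ : ℝ) (hγ : 0 < γ) (hγ' : γ < 4 * Δstar / Real.pi ^ 2)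
    (hδ : 0 < δ) (hδ' : δ < (4 * Δstar / Real.pi ^ 2 - γ) * θm ^ 2 / 2) :
    ∀ v : V3, IsUnitEigen A v →
      Ufun A u γ (Ra Real.pi v) 0 -
        Θ.inf' hΘne (fun θ' => Ufun A u γ (Ra Real.pi v) θ') > δ :=
  synergistic_gap_general A hA u Θ hΘne hΘ θm hθm Δstar hΔpos hΔ γ δ hγ' hδ'
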